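/- arXiv:2505.03081 — 4 statements merged into one kernel-verified Lean document; each statement's English description precedes it below -/
import Mathlib

section
/- Let V be an inverse semivector space over a field F. Then for all x ∈ V and α ∈ F: (1) (−α)•x = α•(neg x) = neg(α•x); (2) 0•x = 0_{α•x}, and in particular 0_x = 0_{α•x}; (3) α•0_x = 0_x, i.e. α•e = e for every additive idempotent e of V. -/
/-- An inverse semivector space over a field `F`. -/
structure InvSemivectorSpace (F : Type*) [Field F] (V : Type*) where
  add : V → V → V
  neg : V → V
  smul : F → V → V
  add_comm' : ∀ x y : V, add x y = add y x
  add_assoc' : ∀ x y z : V, add (add x y) z = add x (add y z)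
  add_neg_add : ∀ x : V, add (add x (neg x)) x = x
  neg_add_neg : ∀ x : V, add (add (neg x) x) (neg x) = neg x
  add_smul' : ∀ (α β : F) (x : V), smul (α + β) x = add (smul α x) (smul β x)
  smul_add' : ∀ (α : F) (x y : V), smul α (add x y) = add (smul α x) (smul α y)
  smul_smul' : ∀ (α β : F) (x : V), smul α (smul β x) = smul (α * β) x
  one_smul' : ∀ x : V, smul 1 x = x

namespace InvSemivectorSpace

variable {F : Type*} [Field F] {V : Type*} (S : InvSemivectorSpace F V)

/-- `0_x := x + neg x`. -/
def z0 (x : V) : V := S.add x (S.neg x)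

/-- The natural partial order: `x ⪯ y` iff `x = y + 0_x`. -/
def le (x y : V) : Prop := x = S.add y (S.z0 x)

/-- Additive idempotents. -/
def IsIdem (e : V) : Prop := S.add e e = e

lemma add_left_comm' (x y z : V) :
    S.add x (S.add y z) = S.add y (S.add x z) := by
  rw [← S.add_assoc', S.add_comm' x y, S.add_assoc']

/-- Uniqueness of inverses in a commutative inverse semigroup. -/
lemma inv_unique {x y z : V}
    (h1 : S.add (S.add x y) x = x)
    (h2 : S.add (S.add y x) y = y)
    (h3 : S.add (S.add x z) x = x)
    (h4 : S.add (S.add z x) z = z) : y = z := by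
  have hy : y = S.add (S.add y x) z := by
    calc y = S.add (S.add y x) y := h2.symm
    _ = S.add (S.add y (S.add (S.add x z) x)) y := by rw [h3]
    _ = S.add (S.add (S.add (S.add y x) y) x) z := by
          simp only [S.add_assoc', S.add_comm', S.add_left_comm']
    _ = S.add (S.add y x) z := by rw [h2]
  have hz : z = S.add (S.add z x) y := by
    calc z = S.add (S.add z x) z := h4.symm
    _ = S.add (S.add z (S.add (S.add x y) x)) z := by rw [h1]
    _ = S.add (S.add (S.add (S.add z x) z) x) y := by
          simp only [S.add_assoc', S.add_comm', S.add_left_comm']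
    _ = S.add (S.add z x) y := by rw [h4]
  calc y = S.add (S.add y x) z := hy
  _ = S.add (S.add z x) y := by
        simp only [S.add_assoc', S.add_comm', S.add_left_comm']
  _ = z := hz.symm

end InvSemivectorSpace

theorem stmt_0 {F : Type*} [Field F] {V : Type*} (S : InvSemivectorSpace F V)
    (x : V) (α : F) :
    -- (1)
    (S.smul (-α) x = S.smul α (S.neg x) ∧ S.smul α (S.neg x) = S.neg (S.smul α x)) ∧
    -- (2)
    (S.smul 0 x = S.z0 (S.smul α x) ∧ S.z0 x = S.z0 (S.smul α x)) ∧
    -- (3)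
    (S.smul α (S.z0 x) = S.z0 x ∧ ∀ e : V, S.IsIdem e → S.smul α e = e) := by
  have hneg1 : ∀ y : V, S.add (S.add y (S.neg y)) y = y := S.add_neg_add
  have hneg2 : ∀ y : V, S.add (S.add (S.neg y) y) (S.neg y) = S.neg y := S.neg_add_neg
  -- (-β)•y is an inverse of β•y, hence equals neg (β•y)
  have key1 : ∀ (y : V) (β : F), S.smul (-β) y = S.neg (S.smul β y) := by
    intro y β
    have h1 : S.add (S.add (S.smul β y) (S.smul (-β) y)) (S.smul β y) = S.smul β y := by
      rw [← S.add_smul', ← S.add_smul', add_neg_cancel, zero_add]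
    have h2 : S.add (S.add (S.smul (-β) y) (S.smul β y)) (S.smul (-β) y)
        = S.smul (-β) y := by
      rw [← S.add_smul', ← S.add_smul', neg_add_cancel, zero_add]
    exact S.inv_unique h1 h2 (hneg1 (S.smul β y)) (hneg2 (S.smul β y))
  -- α•(neg x) is an inverse of α•x
  have hsmn1 : S.add (S.add (S.smul α x) (S.smul α (S.neg x))) (S.smul α x)
      = S.smul α x := by
    rw [← S.smul_add', ← S.smul_add', S.add_neg_add]
  have hsmn2 : S.add (S.add (S.smul α (S.neg x)) (S.smul α x)) (S.smul α (S.neg x))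
      = S.smul α (S.neg x) := by
    rw [← S.smul_add', ← S.smul_add', S.neg_add_neg]
  have key2 : S.smul α (S.neg x) = S.neg (S.smul α x) :=
    S.inv_unique hsmn1 hsmn2 (hneg1 (S.smul α x)) (hneg2 (S.smul α x))
  -- 0•y = 0_{β•y}
  have key3 : ∀ (y : V) (β : F), S.smul 0 y = S.z0 (S.smul β y) := by
    intro y β
    rw [InvSemivectorSpace.z0, ← key1 y β, ← S.add_smul', add_neg_cancel]
  have h0 : ∀ y : V, S.z0 y = S.smul 0 y := by
    intro y
    rw [key3 y 1, S.one_smul']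
  have key4 : S.z0 x = S.z0 (S.smul α x) := by rw [h0 x, key3 x α]
  have key5 : ∀ y : V, S.smul α (S.z0 y) = S.z0 y := by
    intro y
    rw [h0 y, S.smul_smul', mul_zero]
  refine ⟨⟨(key1 x α).trans key2.symm, key2⟩, ⟨key3 x α, key4⟩, key5 x, ?_⟩
  intro e he
  have hee : S.add (S.add e e) e = e := by rw [he, he]
  have hne : S.neg e = e :=
    S.inv_unique (hneg1 e) (hneg2 e) hee hee
  have hz : S.z0 e = e := by rw [InvSemivectorSpace.z0, hne, he]
  rw [← hz, key5 e, hz]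
end

section
/- Let S be an associative inverse semialgebra over a field F, i.e. a non-associative inverse semialgebra whose multiplication is associative. Then 0_{x·y + neg(y·x)} ⪯ 0_x + 0_y for all x, y ∈ S. -/
/-- A non-associative inverse semialgebra over `F`. -/
structure NAInvSemialgebra (F : Type*) [Field F] (V : Type*) extends
    InvSemivectorSpace F V where
  mul : V → V → V
  smul_mul : ∀ (α : F), α ≠ 0 → ∀ x y : V, smul α (mul x y) = mul (smul α x) y
  mul_smul'' : ∀ (α : F), α ≠ 0 → ∀ x y : V, smul α (mul x y) = mul x (smul α y)
  mul_add_le : ∀ x y z : V,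
    toInvSemivectorSpace.le (add (mul x y) (mul x z)) (mul x (add y z))
  add_mul_le : ∀ x y z : V,
    toInvSemivectorSpace.le (add (mul x y) (mul z y)) (mul (add x z) y)
  mul_idem_add : ∀ x z e : V, toInvSemivectorSpace.IsIdem e →
    mul x (add e z) = add (mul x e) (mul x z)
  idem_add_mul : ∀ x z e : V, toInvSemivectorSpace.IsIdem e →
    mul (add x e) z = add (mul x z) (mul e z)
  idem_mul_le₁ : ∀ e f : V, toInvSemivectorSpace.IsIdem e → toInvSemivectorSpace.IsIdem f →
    toInvSemivectorSpace.le (add e f) (mul e f)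
  idem_mul_le₂ : ∀ e f : V, toInvSemivectorSpace.IsIdem e → toInvSemivectorSpace.IsIdem f →
    toInvSemivectorSpace.le (mul e f) f

section Aux

variable {F : Type*} [Field F] {V : Type*}

/-- Type synonym carrying an `AddCommSemigroup` structure from `S.add`. -/
def auxCar (_S : InvSemivectorSpace F V) : Type _ := V

instance auxACS (S : InvSemivectorSpace F V) : AddCommSemigroup (auxCar S) where
  add := S.add
  add_assoc := S.add_assoc'
  add_comm := S.add_comm'

def toCar (S : InvSemivectorSpace F V) (v : V) : auxCar S := v

variable (S : NAInvSemialgebra F V)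

lemma aux_zadd (x : V) : S.add (S.z0 x) x = x := S.add_neg_add x

lemma aux_absorb0 (x a b : V) (hx : S.add (S.add x a) x = x)
    (hb : S.add (S.add b x) b = b) : b = S.add b (S.add x a) := by
  have hAC : S.add (S.add b (S.add (S.add x a) x)) b
      = S.add (S.add (S.add b x) b) (S.add x a) := by
    let T := S.toInvSemivectorSpace
    show (toCar T b + ((toCar T x + toCar T a) + toCar T x)) + toCar T b
        = ((toCar T b + toCar T x) + toCar T b) + (toCar T x + toCar T a)
    simp only [add_comm, add_left_comm, add_assoc]
  have h1 : S.add (S.add b (S.add (S.add x a) x)) b = b := by rw [hx]; exact hb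
  have h2 := h1.symm.trans hAC
  rw [hb] at h2
  exact h2

lemma aux_neg_unique (x a : V) (h1 : S.add (S.add x a) x = x)
    (h2 : S.add (S.add a x) a = a) : a = S.neg x := by
  have ha : a = S.add a (S.add x (S.neg x)) :=
    aux_absorb0 S x (S.neg x) a (S.add_neg_add x) h2
  have hn : S.neg x = S.add (S.neg x) (S.add x a) :=
    aux_absorb0 S x a (S.neg x) h1 (S.neg_add_neg x)
  have hAC : S.add a (S.add x (S.neg x)) = S.add (S.neg x) (S.add x a) := by
    let T := S.toInvSemivectorSpace
    show toCar T a + (toCar T x + toCar T (S.neg x))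
        = toCar T (S.neg x) + (toCar T x + toCar T a)
    simp only [add_comm, add_left_comm, add_assoc]
  exact ha.trans (hAC.trans hn.symm)

lemma aux_neg_eq (x : V) : S.neg x = S.smul (-1) x := by
  have e1 : S.add (S.smul 1 x) (S.smul (-1) x) = S.smul 0 x := by
    rw [← S.add_smul']; norm_num
  rw [S.one_smul'] at e1
  have e2 : S.add (S.smul 0 x) (S.smul 1 x) = S.smul 1 x := by
    rw [← S.add_smul']; norm_num
  rw [S.one_smul'] at e2
  have e3 : S.add (S.smul 0 x) (S.smul (-1) x) = S.smul (-1) x := by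
    rw [← S.add_smul']; norm_num
  symm
  apply aux_neg_unique
  · rw [e1]; exact e2
  · rw [S.add_comm' (S.smul (-1) x) x, e1]; exact e3

lemma aux_z0_eq (x : V) : S.z0 x = S.smul 0 x := by
  have e1 : S.add (S.smul 1 x) (S.smul (-1) x) = S.smul 0 x := by
    rw [← S.add_smul']; norm_num
  rw [S.one_smul'] at e1
  show S.add x (S.neg x) = S.smul 0 x
  rw [aux_neg_eq S]; exact e1

lemma aux_z0_add (a b : V) : S.z0 (S.add a b) = S.add (S.z0 a) (S.z0 b) := by
  simp only [aux_z0_eq S]; rw [S.smul_add']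

lemma aux_z0_neg (b : V) : S.z0 (S.neg b) = S.z0 b := by
  simp only [aux_z0_eq S]
  rw [aux_neg_eq S, S.smul_smul']
  norm_num

lemma aux_z0_idem (x : V) : S.add (S.z0 x) (S.z0 x) = S.z0 x := by
  rw [aux_z0_eq S, ← S.add_smul']; norm_num

lemma aux_idem_z0 (e : V) (he : S.add e e = e) : S.z0 e = e := by
  have hne : e = S.neg e := aux_neg_unique S e e (by rw [he, he]) (by rw [he, he])
  show S.add e (S.neg e) = e
  rw [← hne, he]

lemma aux_z0_z0 (x : V) : S.z0 (S.z0 x) = S.z0 x :=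
  aux_idem_z0 S _ (aux_z0_idem S x)

lemma aux_mul_idem (x e : V) (he : S.add e e = e) :
    S.add (S.mul x e) (S.mul x e) = S.mul x e := by
  have h := S.mul_idem_add x e e he
  rw [he] at h
  exact h.symm

lemma aux_e_mul_e (e : V) (he : S.add e e = e) : S.mul e e = e := by
  have h1 := S.idem_mul_le₁ e e he he
  have h2 := S.idem_mul_le₂ e e he he
  unfold InvSemivectorSpace.le at h1 h2
  rw [he, aux_idem_z0 S e he] at h1
  rw [aux_idem_z0 S _ (aux_mul_idem S e e he)] at h2
  rw [S.add_comm'] at h1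
  exact (h1.trans h2.symm).symm

lemma aux_absorb (hassoc : ∀ x y z : V, S.mul (S.mul x y) z = S.mul x (S.mul y z))
    (x e : V) (he : S.add e e = e) : S.add e (S.mul x e) = S.mul x e := by
  have h := S.idem_mul_le₂ (S.mul x e) e (aux_mul_idem S x e he) he
  unfold InvSemivectorSpace.le at h
  rw [hassoc, aux_e_mul_e S e he] at h
  rw [aux_idem_z0 S _ (aux_mul_idem S x e he)] at h
  exact h.symm

lemma aux_key (hassoc : ∀ x y z : V, S.mul (S.mul x y) z = S.mul x (S.mul y z))
    (x y : V) : S.add (S.z0 y) (S.z0 (S.mul x y)) = S.z0 (S.mul x y) := by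
  have hzy : S.add (S.z0 y) (S.z0 y) = S.z0 y := aux_z0_idem S y
  have hA : S.mul x y = S.add (S.mul x (S.z0 y)) (S.mul x y) := by
    have h := S.mul_idem_add x y (S.z0 y) hzy
    rw [aux_zadd S y] at h
    exact h
  have hB : S.z0 (S.mul x y) = S.add (S.mul x (S.z0 y)) (S.z0 (S.mul x y)) := by
    have h := congrArg S.z0 hA
    rw [aux_z0_add S, aux_idem_z0 S _ (aux_mul_idem S x (S.z0 y) hzy)] at h
    exact h
  have hC := aux_absorb S hassoc x (S.z0 y) hzy
  conv_lhs => rw [hB]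
  rw [← S.add_assoc', hC]
  exact hB.symm

end Aux


theorem stmt_3 {F : Type*} [Field F] {V : Type*} (S : NAInvSemialgebra F V)
    (hassoc : ∀ x y z : V, S.mul (S.mul x y) z = S.mul x (S.mul y z)) :
    ∀ x y : V,
      S.le (S.z0 (S.add (S.mul x y) (S.neg (S.mul y x)))) (S.add (S.z0 x) (S.z0 y)) := by
  intro x y
  have hkey1 := aux_key S hassoc x y
  have hkey2 := aux_key S hassoc y x
  show S.z0 (S.add (S.mul x y) (S.neg (S.mul y x)))
      = S.add (S.add (S.z0 x) (S.z0 y))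
          (S.z0 (S.z0 (S.add (S.mul x y) (S.neg (S.mul y x)))))
  rw [aux_z0_z0 S, aux_z0_add S, aux_z0_neg S]
  have hfin : S.add (S.add (S.z0 x) (S.z0 y))
        (S.add (S.z0 (S.mul x y)) (S.z0 (S.mul y x)))
      = S.add (S.add (S.z0 y) (S.z0 (S.mul x y)))
        (S.add (S.z0 x) (S.z0 (S.mul y x))) := by
    let T := S.toInvSemivectorSpace
    show (toCar T (S.z0 x) + toCar T (S.z0 y))
          + (toCar T (S.z0 (S.mul x y)) + toCar T (S.z0 (S.mul y x)))
      = (toCar T (S.z0 y) + toCar T (S.z0 (S.mul x y)))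
          + (toCar T (S.z0 x) + toCar T (S.z0 (S.mul y x)))
    simp only [add_comm, add_left_comm, add_assoc]
  rw [hfin, hkey1, hkey2]
end

section
/- Let S be a right distributive associative inverse semialgebra over a field F, i.e. a non-associative inverse semialgebra whose multiplication is associative and satisfies (y+z)·x = y·x + z·x for all x, y, z ∈ S. Define the bracket [x,y] := x·y + neg(y·x). Then S with this bracket is a Lie inverse semialgebra: for all x, y, z ∈ S, all additive idempotents e, f of S, and all nonzero α ∈ F, (1) α•[x,y] = [α•x,y] = [x,α•y]; (2) [x,y] + [x,z] ⪯ [x,y+z]; (3) [x,y] = neg [y,x]; (4) [x,e+z] = [x,e] + [x,z]; (5) [[x,y],z] + [[y,z],x] + [[z,x],y] ⪯ 0_{x+y+z}; (6) [e,f] = e+f. Moreover, 0_{[x,y]} = [0_x,y] + [x,0_y] for all x, y ∈ S. -/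
/-- The commutator bracket `[x,y] = x·y + neg (y·x)` on a non-associative inverse
semialgebra. -/
def NAInvSemialgebra.cbr {F : Type*} [Field F] {V : Type*}
    (S : NAInvSemialgebra F V) (x y : V) : V :=
  S.add (S.mul x y) (S.neg (S.mul y x))


namespace InvSemivectorSpace

variable {F : Type*} [Field F] {V : Type*} (S : InvSemivectorSpace F V)

lemma assocI : Std.Associative S.add := ⟨S.add_assoc'⟩
lemma commI : Std.Commutative S.add := ⟨S.add_comm'⟩

lemma z0_def (x : V) : S.z0 x = S.add x (S.neg x) := rfl

lemma inv_unique_s4 {x b c : V}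
    (hb1 : S.add (S.add x b) x = x) (hb2 : S.add (S.add b x) b = b)
    (hc1 : S.add (S.add x c) x = x) (hc2 : S.add (S.add c x) c = c) : b = c := by
  haveI := S.assocI; haveI := S.commI
  have hxb : S.add (S.add x b) (S.add x b) = S.add x b := by
    calc S.add (S.add x b) (S.add x b) = S.add x (S.add (S.add b x) b) := by ac_rfl
    _ = S.add x b := by rw [hb2]
  have hxc : S.add (S.add x c) (S.add x c) = S.add x c := by
    calc S.add (S.add x c) (S.add x c) = S.add x (S.add (S.add c x) c) := by ac_rfl
    _ = S.add x c := by rw [hc2]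
  have h1 : b = S.add (S.add x b) c := by
    calc b = S.add (S.add b x) b := hb2.symm
    _ = S.add (S.add b (S.add (S.add x c) x)) b := by rw [hc1]
    _ = S.add (S.add (S.add x b) (S.add x b)) c := by ac_rfl
    _ = S.add (S.add x b) c := by rw [hxb]
  have h2 : c = S.add (S.add x c) b := by
    calc c = S.add (S.add c x) c := hc2.symm
    _ = S.add (S.add c (S.add (S.add x b) x)) c := by rw [hb1]
    _ = S.add (S.add (S.add x c) (S.add x c)) b := by ac_rfl
    _ = S.add (S.add x c) b := by rw [hxc]
  calc b = S.add (S.add x b) c := h1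
  _ = S.add (S.add x c) b := by ac_rfl
  _ = c := h2.symm

lemma smul_comb (α β : F) (x : V) :
    S.add (S.smul α x) (S.smul β x) = S.smul (α + β) x := (S.add_smul' α β x).symm

lemma neg_eq (x : V) : S.neg x = S.smul (-1) x := by
  have hx1 : S.smul 1 x = x := S.one_smul' x
  refine S.inv_unique_s4 (x := x) (S.add_neg_add x) (S.neg_add_neg x) ?_ ?_
  · calc S.add (S.add x (S.smul (-1) x)) x
        = S.add (S.add (S.smul 1 x) (S.smul (-1) x)) (S.smul 1 x) := by rw [hx1]
    _ = S.add (S.smul (1 + -1) x) (S.smul 1 x) := by rw [S.smul_comb]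
    _ = S.smul ((1 + -1) + 1) x := by rw [S.smul_comb]
    _ = x := by norm_num [hx1]
  · calc S.add (S.add (S.smul (-1) x) x) (S.smul (-1) x)
        = S.add (S.add (S.smul (-1) x) (S.smul 1 x)) (S.smul (-1) x) := by rw [hx1]
    _ = S.add (S.smul (-1 + 1) x) (S.smul (-1) x) := by rw [S.smul_comb]
    _ = S.smul ((-1 + 1) + -1) x := by rw [S.smul_comb]
    _ = S.smul (-1) x := by norm_num

lemma z0_eq (x : V) : S.z0 x = S.smul 0 x := by
  have hx1 : S.smul 1 x = x := S.one_smul' x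
  calc S.z0 x = S.add x (S.neg x) := rfl
  _ = S.add (S.smul 1 x) (S.smul (-1) x) := by rw [hx1, S.neg_eq]
  _ = S.smul (1 + -1) x := by rw [S.smul_comb]
  _ = S.smul 0 x := by norm_num

lemma add_z0 (x : V) : S.add x (S.z0 x) = x := by
  have hx1 : S.smul 1 x = x := S.one_smul' x
  calc S.add x (S.z0 x) = S.add (S.smul 1 x) (S.smul 0 x) := by rw [hx1, S.z0_eq]
  _ = S.smul (1 + 0) x := by rw [S.smul_comb]
  _ = x := by norm_num [hx1]

lemma neg_neg' (x : V) : S.neg (S.neg x) = x := by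
  rw [S.neg_eq, S.neg_eq, S.smul_smul']; norm_num [S.one_smul']

lemma neg_add' (x y : V) : S.neg (S.add x y) = S.add (S.neg x) (S.neg y) := by
  rw [S.neg_eq, S.smul_add', ← S.neg_eq, ← S.neg_eq]

lemma smul_neg' (α : F) (x : V) : S.smul α (S.neg x) = S.neg (S.smul α x) := by
  rw [S.neg_eq, S.neg_eq, S.smul_smul', S.smul_smul']; ring_nf

lemma z0_add' (x y : V) : S.z0 (S.add x y) = S.add (S.z0 x) (S.z0 y) := by
  rw [S.z0_eq, S.z0_eq, S.z0_eq, S.smul_add']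

lemma z0_z0 (x : V) : S.z0 (S.z0 x) = S.z0 x := by
  rw [S.z0_eq, S.z0_eq, S.smul_smul']; norm_num

lemma z0_neg' (x : V) : S.z0 (S.neg x) = S.z0 x := by
  rw [S.z0_eq, S.z0_eq, S.neg_eq, S.smul_smul']; norm_num

lemma z0_smul' (α : F) (x : V) : S.z0 (S.smul α x) = S.z0 x := by
  rw [S.z0_eq, S.z0_eq, S.smul_smul']; norm_num

lemma neg_z0 (x : V) : S.neg (S.z0 x) = S.z0 x := by
  rw [S.z0_eq, S.neg_eq, S.smul_smul']; norm_num

lemma isIdem_z0 (x : V) : S.IsIdem (S.z0 x) := by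
  show S.add (S.z0 x) (S.z0 x) = S.z0 x
  rw [S.z0_eq, S.smul_comb]; norm_num

lemma neg_of_idem {e : V} (he : S.IsIdem e) : S.neg e = e := by
  have he' : S.add e e = e := he
  have h : S.add (S.add e e) e = e := by rw [he', he']
  exact S.inv_unique_s4 (S.add_neg_add e) (S.neg_add_neg e) h h

lemma z0_of_idem {e : V} (he : S.IsIdem e) : S.z0 e = e := by
  show S.add e (S.neg e) = e
  rw [S.neg_of_idem he]; exact he

lemma le_add_right {a b : V} (c : V) (h : S.le a b) :
    S.le (S.add a c) (S.add b c) := by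
  haveI := S.assocI; haveI := S.commI
  show S.add a c = S.add (S.add b c) (S.z0 (S.add a c))
  rw [S.z0_add']
  calc S.add a c = S.add (S.add b (S.z0 a)) c := by rw [← h]
  _ = S.add (S.add b (S.z0 a)) (S.add c (S.z0 c)) := by rw [S.add_z0]
  _ = S.add (S.add b c) (S.add (S.z0 a) (S.z0 c)) := by ac_rfl

lemma key5 {a1 a2 b1 b2 c1 c2 t1 t2 t3 ex ey ez : V}
    (hE1 : S.add b2 (S.neg c1) = S.add t1 (S.add (S.z0 b2) (S.z0 c1)))
    (hE2 : S.add c2 (S.neg a1) = S.add t2 (S.add (S.z0 c2) (S.z0 a1)))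
    (hE3 : S.add a2 (S.neg b1) = S.add t3 (S.add (S.z0 a2) (S.z0 b1)))
    (hx : S.add (S.z0 b1) ex = S.z0 b1)
    (hy : S.add (S.z0 c1) ey = S.z0 c1)
    (hz : S.add (S.z0 a1) ez = S.z0 a1) :
    S.le (S.add (S.add (S.add (S.add a1 (S.neg a2)) t1) (S.add (S.add b1 (S.neg b2)) t2))
      (S.add (S.add c1 (S.neg c2)) t3)) (S.add (S.add ex ey) ez) := by
  haveI := S.assocI; haveI := S.commI
  have hsum : S.add (S.add (S.add b2 (S.neg c1)) (S.add c2 (S.neg a1))) (S.add a2 (S.neg b1))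
      = S.add (S.add (S.add t1 t2) t3)
          (S.add (S.add (S.add (S.add (S.add (S.z0 a1) (S.z0 a2)) (S.z0 b1)) (S.z0 b2)) (S.z0 c1)) (S.z0 c2)) := by
    rw [hE1, hE2, hE3]; ac_rfl
  have hsumN : S.add (S.add (S.add (S.neg b2) c1) (S.add (S.neg c2) a1)) (S.add (S.neg a2) b1)
      = S.add (S.add (S.add (S.neg t1) (S.neg t2)) (S.neg t3))
          (S.add (S.add (S.add (S.add (S.add (S.z0 a1) (S.z0 a2)) (S.z0 b1)) (S.z0 b2)) (S.z0 c1)) (S.z0 c2)) := by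
    have h := congrArg S.neg hsum
    simp only [S.neg_add', S.neg_neg', S.neg_z0] at h
    exact h
  have hJ : S.add (S.add (S.add (S.add a1 (S.neg a2)) t1) (S.add (S.add b1 (S.neg b2)) t2))
        (S.add (S.add c1 (S.neg c2)) t3)
      = S.add (S.add (S.add (S.add (S.add (S.add (S.z0 a1) (S.z0 a2)) (S.z0 b1)) (S.z0 b2)) (S.z0 c1)) (S.z0 c2))
          (S.add (S.add (S.z0 t1) (S.z0 t2)) (S.z0 t3)) := by
    have step1 : S.add (S.add (S.add (S.add a1 (S.neg a2)) t1) (S.add (S.add b1 (S.neg b2)) t2))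
          (S.add (S.add c1 (S.neg c2)) t3)
        = S.add (S.add (S.add (S.add (S.neg b2) c1) (S.add (S.neg c2) a1)) (S.add (S.neg a2) b1))
            (S.add (S.add t1 t2) t3) := by ac_rfl
    rw [step1, hsumN, S.z0_def t1, S.z0_def t2, S.z0_def t3]
    ac_rfl
  show S.add (S.add (S.add (S.add a1 (S.neg a2)) t1) (S.add (S.add b1 (S.neg b2)) t2))
        (S.add (S.add c1 (S.neg c2)) t3)
      = S.add (S.add (S.add ex ey) ez)
          (S.z0 (S.add (S.add (S.add (S.add a1 (S.neg a2)) t1) (S.add (S.add b1 (S.neg b2)) t2))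
            (S.add (S.add c1 (S.neg c2)) t3)))
  rw [hJ]
  simp only [S.z0_add', S.z0_z0]
  have h4 : S.add
      (S.add (S.add (S.add (S.add (S.add (S.add (S.z0 a1) (S.z0 a2)) (S.z0 b1)) (S.z0 b2)) (S.z0 c1)) (S.z0 c2))
        (S.add (S.add (S.z0 t1) (S.z0 t2)) (S.z0 t3)))
      (S.add (S.add ex ey) ez)
      = S.add (S.add (S.add (S.add (S.add (S.add (S.z0 a1) (S.z0 a2)) (S.z0 b1)) (S.z0 b2)) (S.z0 c1)) (S.z0 c2))
        (S.add (S.add (S.z0 t1) (S.z0 t2)) (S.z0 t3)) := by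
    have r1 : S.add
        (S.add (S.add (S.add (S.add (S.add (S.add (S.z0 a1) (S.z0 a2)) (S.z0 b1)) (S.z0 b2)) (S.z0 c1)) (S.z0 c2))
          (S.add (S.add (S.z0 t1) (S.z0 t2)) (S.z0 t3)))
        (S.add (S.add ex ey) ez)
        = S.add (S.add (S.add (S.add (S.z0 b1) ex) (S.add (S.z0 c1) ey)) (S.add (S.z0 a1) ez))
            (S.add (S.add (S.add (S.z0 a2) (S.z0 b2)) (S.z0 c2))
              (S.add (S.add (S.z0 t1) (S.z0 t2)) (S.z0 t3))) := by ac_rfl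
    rw [r1, hx, hy, hz]
    ac_rfl
  conv_lhs => rw [← h4]
  exact S.add_comm' _ _

end InvSemivectorSpace

namespace NAInvSemialgebra

variable {F : Type*} [Field F] {V : Type*} (S : NAInvSemialgebra F V)

lemma neg_mul (x y : V) : S.mul (S.neg x) y = S.neg (S.mul x y) := by
  rw [S.neg_eq x, S.neg_eq (S.mul x y), ← S.smul_mul (-1) (neg_ne_zero.mpr one_ne_zero) x y]

lemma mul_neg (x y : V) : S.mul x (S.neg y) = S.neg (S.mul x y) := by
  rw [S.neg_eq y, S.neg_eq (S.mul x y), ← S.mul_smul'' (-1) (neg_ne_zero.mpr one_ne_zero) x y]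

lemma isIdem_mul_right (x : V) {e : V} (he : S.IsIdem e) : S.IsIdem (S.mul x e) := by
  have he' : S.add e e = e := he
  show S.add (S.mul x e) (S.mul x e) = S.mul x e
  rw [← S.mul_idem_add x e e he, he']

lemma mul_z0_absorb (x y : V) :
    S.z0 (S.mul x y) = S.add (S.mul x (S.z0 y)) (S.z0 (S.mul x y)) := by
  have h := S.mul_add_le x y (S.neg y)
  unfold InvSemivectorSpace.le at h
  rw [S.mul_neg x y] at h
  rw [← S.z0_def y, ← S.z0_def (S.mul x y)] at h
  rw [S.z0_z0] at h
  exact h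

lemma z0_mul (hrd : ∀ x y z : V, S.mul (S.add y z) x = S.add (S.mul y x) (S.mul z x))
    (x y : V) : S.mul (S.z0 x) y = S.z0 (S.mul x y) := by
  rw [S.z0_def x, hrd y x (S.neg x), S.neg_mul x y, ← S.z0_def (S.mul x y)]

lemma z0_mul_absorb_right (hrd : ∀ x y z : V, S.mul (S.add y z) x = S.add (S.mul y x) (S.mul z x))
    (w r : V) : S.add (S.z0 (S.mul w r)) (S.z0 r) = S.z0 (S.mul w r) := by
  haveI := S.assocI; haveI := S.commI
  have hidem : S.IsIdem (S.mul (S.z0 w) (S.z0 r)) := S.isIdem_mul_right (S.z0 w) (S.isIdem_z0 r)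
  have h2 := S.idem_mul_le₂ (S.z0 w) (S.z0 r) (S.isIdem_z0 w) (S.isIdem_z0 r)
  unfold InvSemivectorSpace.le at h2
  rw [S.z0_of_idem hidem] at h2
  have h3 : S.z0 (S.mul w r) = S.add (S.mul (S.z0 w) (S.z0 r)) (S.z0 (S.mul w r)) := by
    have h := congrArg S.z0 (S.mul_z0_absorb w r)
    rw [S.z0_add' (S.mul w (S.z0 r)) (S.z0 (S.mul w r)), S.z0_z0,
      ← S.z0_mul hrd w (S.z0 r)] at h
    exact h
  calc S.add (S.z0 (S.mul w r)) (S.z0 r)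
      = S.add (S.add (S.mul (S.z0 w) (S.z0 r)) (S.z0 (S.mul w r))) (S.z0 r) := by rw [← h3]
  _ = S.add (S.add (S.z0 r) (S.mul (S.z0 w) (S.z0 r))) (S.z0 (S.mul w r)) := by ac_rfl
  _ = S.add (S.mul (S.z0 w) (S.z0 r)) (S.z0 (S.mul w r)) := by rw [← h2]
  _ = S.z0 (S.mul w r) := h3.symm

lemma cbr_neg (x y : V) : S.neg (S.cbr x y) = S.cbr y x := by
  unfold NAInvSemialgebra.cbr
  rw [S.neg_add' (S.mul x y) (S.neg (S.mul y x)), S.neg_neg' (S.mul y x),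
    S.add_comm' (S.neg (S.mul x y)) (S.mul y x)]

end NAInvSemialgebra

theorem stmt_4 {F : Type*} [Field F] {V : Type*} (S : NAInvSemialgebra F V)
    (hassoc : ∀ x y z : V, S.mul (S.mul x y) z = S.mul x (S.mul y z))
    (hrdistrib : ∀ x y z : V, S.mul (S.add y z) x = S.add (S.mul y x) (S.mul z x)) :
    -- (1)
    (∀ (α : F), α ≠ 0 → ∀ x y : V,
      S.smul α (S.cbr x y) = S.cbr (S.smul α x) y ∧
      S.smul α (S.cbr x y) = S.cbr x (S.smul α y)) ∧
    -- (2)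
    (∀ x y z : V, S.le (S.add (S.cbr x y) (S.cbr x z)) (S.cbr x (S.add y z))) ∧
    -- (3)
    (∀ x y : V, S.cbr x y = S.neg (S.cbr y x)) ∧
    -- (4)
    (∀ x z e : V, S.IsIdem e → S.cbr x (S.add e z) = S.add (S.cbr x e) (S.cbr x z)) ∧
    -- (5)
    (∀ x y z : V,
      S.le (S.add (S.add (S.cbr (S.cbr x y) z) (S.cbr (S.cbr y z) x)) (S.cbr (S.cbr z x) y))
        (S.z0 (S.add (S.add x y) z))) ∧
    -- (6)
    (∀ e f : V, S.IsIdem e → S.IsIdem f → S.cbr e f = S.add e f) ∧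
    -- Moreover
    (∀ x y : V, S.z0 (S.cbr x y) = S.add (S.cbr (S.z0 x) y) (S.cbr x (S.z0 y))) := by
  haveI := S.assocI; haveI := S.commI
  refine ⟨?_, ?_, ?_, ?_, ?_, ?_, ?_⟩
  -- (1)
  · intro α hα x y
    constructor
    · unfold NAInvSemialgebra.cbr
      rw [S.smul_add' α (S.mul x y) (S.neg (S.mul y x)), S.smul_neg' α (S.mul y x),
        S.smul_mul α hα x y, S.mul_smul'' α hα y x]
    · unfold NAInvSemialgebra.cbr
      rw [S.smul_add' α (S.mul x y) (S.neg (S.mul y x)), S.smul_neg' α (S.mul y x),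
        S.mul_smul'' α hα x y, S.smul_mul α hα y x]
  -- (2)
  · intro x y z
    have h2 := S.le_add_right (S.neg (S.mul (S.add y z) x)) (S.mul_add_le x y z)
    have e1 : S.add (S.add (S.mul x y) (S.mul x z)) (S.neg (S.mul (S.add y z) x))
        = S.add (S.cbr x y) (S.cbr x z) := by
      unfold NAInvSemialgebra.cbr
      rw [hrdistrib x y z, S.neg_add' (S.mul y x) (S.mul z x)]
      ac_rfl
    rw [e1] at h2
    exact h2
  -- (3)
  · intro x y
    exact (S.cbr_neg y x).symm
  -- (4)
  · intro x z e he
    unfold NAInvSemialgebra.cbr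
    rw [S.mul_idem_add x z e he, hrdistrib x e z, S.neg_add' (S.mul e x) (S.mul z x)]
    ac_rfl
  -- (5)
  · intro x y z
    have hA : S.cbr (S.cbr x y) z
        = S.add (S.add (S.mul (S.mul x y) z) (S.neg (S.mul (S.mul y x) z)))
            (S.mul z (S.add (S.mul y x) (S.neg (S.mul x y)))) := by
      unfold NAInvSemialgebra.cbr
      rw [← S.mul_neg z (S.add (S.mul x y) (S.neg (S.mul y x))),
        S.neg_add' (S.mul x y) (S.neg (S.mul y x)), S.neg_neg' (S.mul y x),
        S.add_comm' (S.neg (S.mul x y)) (S.mul y x),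
        hrdistrib z (S.mul x y) (S.neg (S.mul y x)), S.neg_mul (S.mul y x) z]
    have hB : S.cbr (S.cbr y z) x
        = S.add (S.add (S.mul (S.mul y z) x) (S.neg (S.mul (S.mul z y) x)))
            (S.mul x (S.add (S.mul z y) (S.neg (S.mul y z)))) := by
      unfold NAInvSemialgebra.cbr
      rw [← S.mul_neg x (S.add (S.mul y z) (S.neg (S.mul z y))),
        S.neg_add' (S.mul y z) (S.neg (S.mul z y)), S.neg_neg' (S.mul z y),
        S.add_comm' (S.neg (S.mul y z)) (S.mul z y),
        hrdistrib x (S.mul y z) (S.neg (S.mul z y)), S.neg_mul (S.mul z y) x]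
    have hC : S.cbr (S.cbr z x) y
        = S.add (S.add (S.mul (S.mul z x) y) (S.neg (S.mul (S.mul x z) y)))
            (S.mul y (S.add (S.mul x z) (S.neg (S.mul z x)))) := by
      unfold NAInvSemialgebra.cbr
      rw [← S.mul_neg y (S.add (S.mul z x) (S.neg (S.mul x z))),
        S.neg_add' (S.mul z x) (S.neg (S.mul x z)), S.neg_neg' (S.mul x z),
        S.add_comm' (S.neg (S.mul z x)) (S.mul x z),
        hrdistrib y (S.mul z x) (S.neg (S.mul x z)), S.neg_mul (S.mul x z) y]
    have hE1 := S.mul_add_le z (S.mul y x) (S.neg (S.mul x y))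
    unfold InvSemivectorSpace.le at hE1
    rw [S.mul_neg z (S.mul x y)] at hE1
    rw [← hassoc z y x, ← hassoc z x y] at hE1
    rw [S.z0_add'] at hE1
    rw [S.z0_neg'] at hE1
    have hE2 := S.mul_add_le x (S.mul z y) (S.neg (S.mul y z))
    unfold InvSemivectorSpace.le at hE2
    rw [S.mul_neg x (S.mul y z)] at hE2
    rw [← hassoc x z y, ← hassoc x y z] at hE2
    rw [S.z0_add'] at hE2
    rw [S.z0_neg'] at hE2
    have hE3 := S.mul_add_le y (S.mul x z) (S.neg (S.mul z x))
    unfold InvSemivectorSpace.le at hE3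
    rw [S.mul_neg y (S.mul z x)] at hE3
    rw [← hassoc y x z, ← hassoc y z x] at hE3
    rw [S.z0_add'] at hE3
    rw [S.z0_neg'] at hE3
    rw [S.z0_add' (S.add x y) z, S.z0_add' x y]
    rw [hA, hB, hC]
    exact S.key5 hE1 hE2 hE3
      (S.z0_mul_absorb_right hrdistrib (S.mul y z) x)
      (S.z0_mul_absorb_right hrdistrib (S.mul z x) y)
      (S.z0_mul_absorb_right hrdistrib (S.mul x y) z)
  -- (6)
  · intro e f he hf
    have hfe : S.IsIdem (S.mul f e) := S.isIdem_mul_right f he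
    have hef : S.IsIdem (S.mul e f) := S.isIdem_mul_right e hf
    have h1 := S.idem_mul_le₁ e f he hf
    unfold InvSemivectorSpace.le at h1
    rw [S.z0_add' e f, S.z0_of_idem he, S.z0_of_idem hf] at h1
    have h1' := S.idem_mul_le₁ f e hf he
    unfold InvSemivectorSpace.le at h1'
    rw [S.z0_add' f e, S.z0_of_idem he, S.z0_of_idem hf] at h1'
    have h2 := S.idem_mul_le₂ e f he hf
    unfold InvSemivectorSpace.le at h2
    rw [S.z0_of_idem hef] at h2
    have h2' := S.idem_mul_le₂ f e hf he
    unfold InvSemivectorSpace.le at h2'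
    rw [S.z0_of_idem hfe] at h2'
    have hb : S.add (S.mul e f) (S.mul f e)
        = S.add (S.add e f) (S.add (S.mul e f) (S.mul f e)) := by
      calc S.add (S.mul e f) (S.mul f e)
          = S.add (S.add f (S.mul e f)) (S.add e (S.mul f e)) := by rw [← h2, ← h2']
      _ = S.add (S.add e f) (S.add (S.mul e f) (S.mul f e)) := by ac_rfl
    have ha : S.add e f = S.add (S.add (S.mul e f) (S.mul f e)) (S.add e f) := by
      calc S.add e f = S.add (S.mul e f) (S.add e f) := h1
      _ = S.add (S.mul e f) (S.add f e) := by rw [S.add_comm' e f]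
      _ = S.add (S.mul e f) (S.add (S.mul f e) (S.add f e)) := by rw [← h1']
      _ = S.add (S.add (S.mul e f) (S.mul f e)) (S.add e f) := by ac_rfl
    calc S.cbr e f = S.add (S.mul e f) (S.mul f e) := by
          unfold NAInvSemialgebra.cbr; rw [S.neg_of_idem hfe]
    _ = S.add (S.add e f) (S.add (S.mul e f) (S.mul f e)) := hb
    _ = S.add (S.add (S.mul e f) (S.mul f e)) (S.add e f) := S.add_comm' _ _
    _ = S.add e f := ha.symm
  -- Moreover
  · intro x y
    have e1 : S.cbr (S.z0 x) y = S.add (S.z0 (S.mul x y)) (S.mul y (S.z0 x)) := by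
      unfold NAInvSemialgebra.cbr
      rw [S.z0_mul hrdistrib x y, S.neg_of_idem (S.isIdem_mul_right y (S.isIdem_z0 x))]
    have e2 : S.cbr x (S.z0 y) = S.add (S.mul x (S.z0 y)) (S.z0 (S.mul y x)) := by
      unfold NAInvSemialgebra.cbr
      rw [S.z0_mul hrdistrib y x, S.neg_z0 (S.mul y x)]
    rw [e1, e2]
    unfold NAInvSemialgebra.cbr
    rw [S.z0_add' (S.mul x y) (S.neg (S.mul y x)), S.z0_neg' (S.mul y x)]
    calc S.add (S.z0 (S.mul x y)) (S.z0 (S.mul y x))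
        = S.add (S.add (S.mul x (S.z0 y)) (S.z0 (S.mul x y)))
            (S.add (S.mul y (S.z0 x)) (S.z0 (S.mul y x))) := by
          rw [← S.mul_z0_absorb x y, ← S.mul_z0_absorb y x]
    _ = S.add (S.add (S.z0 (S.mul x y)) (S.mul y (S.z0 x)))
          (S.add (S.mul x (S.z0 y)) (S.z0 (S.mul y x))) := by ac_rfl
end

section
/- Let F be a field and L a Lie algebra over F. Then E(L), with the given operations, is a Lie inverse semialgebra over F: for all u, v, w ∈ E(L), all additive idempotents e = (A,0), f = (B,0) of E(L), and all nonzero α ∈ F, (1) α•[u,v] = [α•u,v] = [u,α•v]; (2) [u,v] + [u,w] ⪯ [u,v+w]; (3) [u,v] = neg [v,u]; (4) [u,e+w] = [u,e] + [u,w]; (5) [[u,v],w] + [[v,w],u] + [[w,u],v] ⪯ 0_{u+v+w}; (6) [e,f] = e+f. Moreover, [0_u, v] = [u, 0_v] = 0_{u+v} for all u, v ∈ E(L). -/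
/-- A Lie inverse semialgebra over `F`. -/
structure LieInvSemialgebra (F : Type*) [Field F] (V : Type*) extends
    InvSemivectorSpace F V where
  br : V → V → V
  smul_br : ∀ (α : F), α ≠ 0 → ∀ x y : V, smul α (br x y) = br (smul α x) y
  br_smul : ∀ (α : F), α ≠ 0 → ∀ x y : V, smul α (br x y) = br x (smul α y)
  br_add_le : ∀ x y z : V,
    toInvSemivectorSpace.le (add (br x y) (br x z)) (br x (add y z))
  br_skew : ∀ x y : V, br x y = neg (br y x)
  br_idem_add : ∀ x z e : V, toInvSemivectorSpace.IsIdem e →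
    br x (add e z) = add (br x e) (br x z)
  jacobi_le : ∀ x y z : V,
    toInvSemivectorSpace.le
      (add (add (br (br x y) z) (br (br y z) x)) (br (br z x) y))
      (toInvSemivectorSpace.z0 (add (add x y) z))
  br_idem : ∀ e f : V, toInvSemivectorSpace.IsIdem e → toInvSemivectorSpace.IsIdem f →
    br e f = add e f

/-- `E(L)`: pairs `(A, a)` where `A` is a finite-dimensional subspace of the Lie
algebra `L` and `a ∈ A`. -/
def EL (F : Type*) [Field F] (L : Type*) [LieRing L] [LieAlgebra F L] :=
  {p : Submodule F L × L // FiniteDimensional F p.1 ∧ p.2 ∈ p.1}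

namespace EL

variable {F : Type*} [Field F] {L : Type*} [LieRing L] [LieAlgebra F L]

/-- `(A,a) + (B,b) = (A + B, a + b)`. -/
def add (u v : EL F L) : EL F L :=
  ⟨(u.1.1 ⊔ v.1.1, u.1.2 + v.1.2),
    haveI := u.2.1
    haveI := v.2.1
    ⟨Submodule.finiteDimensional_sup _ _,
      Submodule.add_mem _ (Submodule.mem_sup_left u.2.2) (Submodule.mem_sup_right v.2.2)⟩⟩

/-- `neg (A,a) = (A, -a)`. -/
def neg (u : EL F L) : EL F L :=
  ⟨(u.1.1, -u.1.2), ⟨u.2.1, Submodule.neg_mem _ u.2.2⟩⟩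

/-- `α • (A,a) = (A, α • a)`. -/
def smul (α : F) (u : EL F L) : EL F L :=
  ⟨(u.1.1, α • u.1.2), ⟨u.2.1, Submodule.smul_mem _ _ u.2.2⟩⟩

/-- `[(A,a),(B,b)] = (A + B + F⁅a,b⁆, ⁅a,b⁆)`. -/
def br (u v : EL F L) : EL F L :=
  ⟨(u.1.1 ⊔ v.1.1 ⊔ Submodule.span F {⁅u.1.2, v.1.2⁆}, ⁅u.1.2, v.1.2⁆),
    haveI := u.2.1
    haveI := v.2.1
    ⟨Submodule.finiteDimensional_sup _ _,
      Submodule.mem_sup_right (Submodule.mem_span_singleton_self _)⟩⟩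

/-- `0_u = u + neg u`. -/
def z0 (u : EL F L) : EL F L := add u (neg u)

/-- The natural partial order on `E(L)`. -/
def le (u v : EL F L) : Prop := u = add v (z0 u)

/-- The zero element `(0, 0)` of `E(L)`. -/
def zero : EL F L :=
  ⟨(⊥, 0), ⟨inferInstance, Submodule.zero_mem _⟩⟩

end EL

section Aux

variable {F : Type*} [Field F] {L : Type*} [LieRing L] [LieAlgebra F L]

namespace EL

lemma ext' {u v : EL F L} (h1 : u.1.1 = v.1.1) (h2 : u.1.2 = v.1.2) : u = v :=
  Subtype.ext (Prod.ext h1 h2)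

lemma le_iff {u v : EL F L} :
    EL.le u v ↔ v.1.1 ≤ u.1.1 ∧ u.1.2 = v.1.2 := by
  constructor
  · intro h
    constructor
    · conv_rhs => rw [h]
      simp [EL.add, EL.z0, EL.neg]
    · have := congrArg (fun x : EL F L => x.1.2) h
      simpa [EL.add, EL.z0, EL.neg] using this
  · rintro ⟨h1, h2⟩
    refine ext' ?_ ?_ <;> simp [EL.add, EL.z0, EL.neg, h2, sup_assoc]
    exact h1

lemma idem_iff {e : EL F L} : EL.add e e = e ↔ e.1.2 = 0 := by
  constructor
  · intro h
    have := congrArg (fun x : EL F L => x.1.2) h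
    simpa [EL.add] using this
  · intro h
    exact ext' (by simp [EL.add]) (by simp [EL.add, h])

lemma span_lie_smul_left (α : F) (hα : α ≠ 0) (a b : L) :
    Submodule.span F {⁅α • a, b⁆} = Submodule.span F {⁅a, b⁆} := by
  rw [smul_lie]
  exact Submodule.span_singleton_smul_eq (isUnit_iff_ne_zero.mpr hα) _

end EL

end Aux

section Aux2

variable {F : Type*} [Field F] {L : Type*} [LieRing L] [LieAlgebra F L]

namespace EL

lemma span_lie_comm (a b : L) :
    Submodule.span F {⁅a, b⁆} = Submodule.span F {⁅b, a⁆} := by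
  rw [← lie_skew a b]
  have : -⁅b, a⁆ = (-1 : F) • ⁅b, a⁆ := by simp
  rw [this]
  exact Submodule.span_singleton_smul_eq (isUnit_iff_ne_zero.mpr (by norm_num)) _

lemma jacobi_snd (a b c : L) : ⁅⁅a,b⁆,c⁆ + ⁅⁅b,c⁆,a⁆ + ⁅⁅c,a⁆,b⁆ = 0 := by
  have h := lie_jacobi a b c
  have e1 : ⁅⁅a,b⁆,c⁆ = -⁅c,⁅a,b⁆⁆ := (lie_skew _ _).symm
  have e2 : ⁅⁅b,c⁆,a⁆ = -⁅a,⁅b,c⁆⁆ := (lie_skew _ _).symm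
  have e3 : ⁅⁅c,a⁆,b⁆ = -⁅b,⁅c,a⁆⁆ := (lie_skew _ _).symm
  rw [e1, e2, e3, ← neg_add, ← neg_add, neg_eq_zero, add_rotate]
  exact h

lemma le_of (S : InvSemivectorSpace F (EL F L)) (hadd : S.add = EL.add)
    (hneg : S.neg = EL.neg) {u v : EL F L}
    (h1 : v.1.1 ≤ u.1.1) (h2 : u.1.2 = v.1.2) : S.le u v := by
  show u = S.add v (S.add u (S.neg u))
  rw [hadd, hneg]
  exact EL.le_iff.mpr ⟨h1, h2⟩

lemma snd_eq_zero (S : InvSemivectorSpace F (EL F L)) (hadd : S.add = EL.add)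
    {e : EL F L} (h : S.IsIdem e) : e.1.2 = 0 := by
  have h' : S.add e e = e := h
  rw [hadd] at h'
  exact EL.idem_iff.mp h'

end EL

end Aux2

/-- `E(L)` with the operations above is a Lie inverse semialgebra; moreover
`[0_u, v] = [u, 0_v] = 0_{u+v}` for all `u, v ∈ E(L)`. -/
theorem stmt_8 (F : Type*) [Field F] (L : Type*) [LieRing L] [LieAlgebra F L] :
    ∃ T : LieInvSemialgebra F (EL F L),
      T.add = EL.add ∧ T.neg = EL.neg ∧ T.smul = EL.smul ∧ T.br = EL.br ∧
      ∀ u v : EL F L,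
        EL.br (EL.z0 u) v = EL.z0 (EL.add u v) ∧
        EL.br u (EL.z0 v) = EL.z0 (EL.add u v) := by
  refine ⟨{
    add := EL.add
    neg := EL.neg
    smul := EL.smul
    br := EL.br
    add_comm' := fun x y => EL.ext' (sup_comm _ _) (add_comm _ _)
    add_assoc' := fun x y z => EL.ext' (sup_assoc _ _ _) (add_assoc _ _ _)
    add_neg_add := fun x => EL.ext' (by simp [EL.add, EL.neg]) (by simp [EL.add, EL.neg])
    neg_add_neg := fun x => EL.ext' (by simp [EL.add, EL.neg]) (by simp [EL.add, EL.neg])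
    add_smul' := fun α β x => EL.ext' (by simp [EL.add, EL.smul]) (by simp [EL.add, EL.smul, add_smul])
    smul_add' := fun α x y => EL.ext' (by simp [EL.add, EL.smul]) (by simp [EL.add, EL.smul, smul_add])
    smul_smul' := fun α β x => EL.ext' (by simp [EL.smul]) (by simp [EL.smul, smul_smul])
    one_smul' := fun x => EL.ext' (by simp [EL.smul]) (by simp [EL.smul])
    smul_br := fun α hα x y => EL.ext'
      (by simp [EL.smul, EL.br,
        Submodule.span_singleton_smul_eq (isUnit_iff_ne_zero.mpr hα)])
      (by simp [EL.smul, EL.br, smul_lie])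
    br_smul := fun α hα x y => EL.ext'
      (by simp [EL.smul, EL.br,
        Submodule.span_singleton_smul_eq (isUnit_iff_ne_zero.mpr hα)])
      (by simp [EL.smul, EL.br, lie_smul])
    br_add_le := by
      intro x y z
      refine EL.le_of _ rfl rfl ?_ ?_
      · simp only [EL.add, EL.br]
        refine sup_le (sup_le ?_ (sup_le ?_ ?_)) ?_
        · exact le_sup_of_le_left (le_sup_of_le_left le_sup_left)
        · exact le_sup_of_le_left (le_sup_of_le_left le_sup_right)
        · exact le_sup_of_le_right (le_sup_of_le_left le_sup_right)
        · rw [Submodule.span_le, Set.singleton_subset_iff, lie_add]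
          exact Submodule.add_mem _
            (Submodule.mem_sup_left
              (Submodule.mem_sup_right (Submodule.mem_span_singleton_self _)))
            (Submodule.mem_sup_right
              (Submodule.mem_sup_right (Submodule.mem_span_singleton_self _)))
      · simp [EL.add, EL.br, lie_add]
    br_skew := fun x y => EL.ext'
      (by
        simp only [EL.br, EL.neg]
        rw [EL.span_lie_comm, sup_comm x.1.1 y.1.1])
      (by
        simp only [EL.br, EL.neg]
        exact (lie_skew _ _).symm)
    br_idem_add := by
      intro x z e he
      have h0 : e.1.2 = 0 := EL.snd_eq_zero _ rfl he
      refine EL.ext' ?_ ?_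
      · simp only [EL.add, EL.br, h0, zero_add, lie_zero,
          Submodule.span_zero_singleton, sup_bot_eq]
        apply le_antisymm
        · refine sup_le (sup_le ?_ (sup_le ?_ ?_)) ?_
          · exact le_sup_of_le_left le_sup_left
          · exact le_sup_of_le_left le_sup_right
          · exact le_sup_of_le_right (le_sup_of_le_left le_sup_right)
          · exact le_sup_of_le_right le_sup_right
        · refine sup_le (sup_le ?_ ?_) (sup_le (sup_le ?_ ?_) ?_)
          · exact le_sup_of_le_left le_sup_left
          · exact le_sup_of_le_left (le_sup_of_le_right le_sup_left)
          · exact le_sup_of_le_left le_sup_left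
          · exact le_sup_of_le_left (le_sup_of_le_right le_sup_right)
          · exact le_sup_right
      · simp [EL.add, EL.br, h0]
    jacobi_le := by
      intro x y z
      refine EL.le_of _ rfl rfl ?_ ?_
      · have hx : x.1.1 ≤ (EL.br (EL.br x y) z).1.1 :=
          le_sup_of_le_left (le_sup_of_le_left (le_sup_of_le_left le_sup_left))
        have hy : y.1.1 ≤ (EL.br (EL.br x y) z).1.1 :=
          le_sup_of_le_left (le_sup_of_le_left (le_sup_of_le_left le_sup_right))
        have hz : z.1.1 ≤ (EL.br (EL.br x y) z).1.1 :=
          le_sup_of_le_left le_sup_right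
        have h1 : (EL.z0 (EL.add (EL.add x y) z)).1.1 ≤ (EL.br (EL.br x y) z).1.1 := by
          simp only [EL.z0, EL.add, EL.neg, sup_idem]
          exact sup_le (sup_le hx hy) hz
        show (EL.z0 (EL.add (EL.add x y) z)).1.1 ≤
          (EL.add (EL.add (EL.br (EL.br x y) z) (EL.br (EL.br y z) x)) (EL.br (EL.br z x) y)).1.1
        exact le_trans h1 (le_sup_of_le_left le_sup_left)
      · show _ = (EL.z0 (EL.add (EL.add x y) z)).1.2
        simp only [EL.add, EL.br, EL.z0, EL.neg]
        rw [add_neg_cancel]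
        exact EL.jacobi_snd _ _ _
    br_idem := by
      intro e f he hf
      have h0e : e.1.2 = 0 := EL.snd_eq_zero _ rfl he
      have h0f : f.1.2 = 0 := EL.snd_eq_zero _ rfl hf
      exact EL.ext'
        (by simp [EL.add, EL.br, h0e, h0f, Submodule.span_zero_singleton])
        (by simp [EL.add, EL.br, h0e, h0f]) },
    rfl, rfl, rfl, rfl, ?_⟩
  intro u v
  constructor
  · refine EL.ext' ?_ ?_
    · simp [EL.z0, EL.add, EL.neg, EL.br, Submodule.span_zero_singleton]
    · simp only [EL.z0, EL.add, EL.neg, EL.br, add_neg_cancel, zero_lie]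
  · refine EL.ext' ?_ ?_
    · simp [EL.z0, EL.add, EL.neg, EL.br, Submodule.span_zero_singleton]
    · simp only [EL.z0, EL.add, EL.neg, EL.br, add_neg_cancel, lie_zero]
end
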